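/- arXiv:1808.03339 — 8 statements merged into one kernel-verified Lean document; each statement's English description precedes it below -/
import Mathlib

section
/- Let C_{φ,w} be a bounded weighted composition operator on ℓ²(X). Then for every x ∈ X the family (|w(y)|²)_{y ∈ φ^{-1}(x)} is summable and C_{φ,w}* C_{φ,w} e_x = ( Σ_{y ∈ φ^{-1}(x)} |w(y)|² ) · e_x. -/
open ContinuousLinearMap

/-!
`C e_x` is the restriction of `w` to the fibre `φ⁻¹(x)`, so its squared `ℓ²`-norm is the fibre
sum of `|w|²`, and the vectors `C e_z` for distinct `z` have disjoint supports. Reading off the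
coordinates of `C* C e_x` via `(C* g) z = ⟪C e_z, g⟫` then gives `‖C e_x‖² • e_x`.
-/

theorem lp.adjoint_apply {𝕜 ι F : Type*} [RCLike 𝕜] [DecidableEq ι]
    [NormedAddCommGroup F] [InnerProductSpace 𝕜 F] [CompleteSpace F]
    (A : lp (fun _ : ι => 𝕜) 2 →L[𝕜] F) (g : F) (i : ι) :
    adjoint A g i = inner 𝕜 (A (lp.single 2 i 1)) g := by
  rw [← adjoint_inner_right, lp.inner_single_left, RCLike.inner_apply, map_one, mul_one]

section WeightedComposition

variable {X : Type*} [DecidableEq X] {φ : X → X} {w : X → ℂ}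
  {C : lp (fun _ : X => ℂ) 2 →L[ℂ] lp (fun _ : X => ℂ) 2}

theorem weightedComposition_apply_single
    (hC : ∀ (f : lp (fun _ : X => ℂ) 2) (y : X), C f y = w y * f (φ y))
    (x : X) : ⇑(C (lp.single 2 x 1)) = {y | φ y = x}.indicator w := by
  ext y
  by_cases h : φ y = x <;> simp [hC, h]

theorem hasSum_norm_sq_weight_fiber
    (hC : ∀ (f : lp (fun _ : X => ℂ) 2) (y : X), C f y = w y * f (φ y))
    (x : X) :
    HasSum (fun y : {y // φ y = x} => ‖w y‖ ^ 2) (‖C (lp.single 2 x 1)‖ ^ 2) := by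
  have h := lp.hasSum_norm (p := 2) (by norm_num) (C (lp.single 2 x 1))
  simp only [ENNReal.toReal_ofNat, Real.rpow_two, weightedComposition_apply_single hC,
    norm_indicator_eq_indicator_norm] at h
  refine (hasSum_subtype_iff_indicator (s := {y | φ y = x}) (f := fun y => ‖w y‖ ^ 2)).mpr ?_
  convert h using 2 with y
  by_cases hy : φ y = x <;> simp [hy]

theorem inner_weightedComposition_single_of_ne
    (hC : ∀ (f : lp (fun _ : X => ℂ) 2) (y : X), C f y = w y * f (φ y))
    {x z : X} (h : z ≠ x) :
    inner ℂ (C (lp.single 2 z 1)) (C (lp.single 2 x 1)) = 0 := by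
  have hdisj : ∀ y, inner ℂ ({y | φ y = z}.indicator w y) ({y | φ y = x}.indicator w y) = 0 := by
    intro y
    by_cases hy : φ y = x
    · simp [hy, Ne.symm h]
    · simp [hy]
  simp only [lp.inner_eq_tsum, weightedComposition_apply_single hC, hdisj, tsum_zero]

end WeightedComposition

theorem adjoint_comp_weighted_composition_apply_single_general
    {X : Type*} [DecidableEq X] (φ : X → X) (w : X → ℂ)
    (C : lp (fun _ : X => ℂ) 2 →L[ℂ] lp (fun _ : X => ℂ) 2)
    (hC : ∀ (f : lp (fun _ : X => ℂ) 2) (y : X), C f y = w y * f (φ y))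
    (x : X) :
    Summable (fun y : {y : X // φ y = x} => ‖w (y : X)‖ ^ 2) ∧
    (ContinuousLinearMap.adjoint C) (C (lp.single 2 x (1 : ℂ))) =
      ((∑' y : {y : X // φ y = x}, ‖w (y : X)‖ ^ 2 : ℝ) : ℂ) • lp.single 2 x (1 : ℂ) := by
  have hsum := hasSum_norm_sq_weight_fiber hC x
  refine ⟨hsum.summable, lp.ext (funext fun z => ?_)⟩
  rw [lp.adjoint_apply, hsum.tsum_eq, lp.coeFn_smul, Pi.smul_apply]
  by_cases hz : z = x
  · subst hz
    simp [inner_self_eq_norm_sq_to_K]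
  · rw [inner_weightedComposition_single_of_ne hC hz, lp.single_apply_ne 2 x _ hz, smul_zero]

/-- Let `C_{φ,w}` be a bounded weighted composition operator on `ℓ²(X)`.
Then for every `x ∈ X` the family `(|w y|²)_{y ∈ φ⁻¹(x)}` is summable and
`C* C e_x = (Σ_{y ∈ φ⁻¹(x)} |w y|²) • e_x`. -/
theorem adjoint_comp_weighted_composition_apply_single
    {X : Type*} [Countable X] [DecidableEq X] (φ : X → X) (w : X → ℂ)
    (C : lp (fun _ : X => ℂ) 2 →L[ℂ] lp (fun _ : X => ℂ) 2)
    (hC : ∀ (f : lp (fun _ : X => ℂ) 2) (y : X), C f y = w y * f (φ y))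
    (x : X) :
    Summable (fun y : {y : X // φ y = x} => ‖w (y : X)‖ ^ 2) ∧
    (ContinuousLinearMap.adjoint C) (C (lp.single 2 x (1 : ℂ))) =
      ((∑' y : {y : X // φ y = x}, ‖w (y : X)‖ ^ 2 : ℝ) : ℂ) • lp.single 2 x (1 : ℂ) :=
  adjoint_comp_weighted_composition_apply_single_general φ w C hC x
end

section
/- Let C_{φ,w} be a bounded weighted composition operator on ℓ²(X) such that C_{φ,w}*C_{φ,w} is invertible in B(ℓ²(X)). Then the Cauchy dual C' := C_{φ,w}(C_{φ,w}*C_{φ,w})^{-1} is again a weighted composition operator: for every f ∈ ℓ²(X) and every y ∈ X, (C' f)(y) = ( w(y) / Σ_{z ∈ φ^{-1}(φ(y))} |w(z)|² ) · f(φ(y)); equivalently, for every x ∈ X, C' e_x = Σ_{y ∈ φ^{-1}(x)} ( w(y) / Σ_{z ∈ φ^{-1}(x)} |w(z)|² ) e_y. -/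
/-!
`C*C` is diagonal in the standard basis: `⟪e_x, C*C g⟫ = ⟪C e_x, C g⟫`, and `C e_x` is supported
on the fibre `φ⁻¹(x)`, so `(C*C g)(x) = (∑_{z ∈ φ⁻¹(x)} |w z|²) · g(x)`. A right inverse of a
diagonal operator divides by the diagonal (which cannot vanish, the operator being surjective), so
`(C (C*C)⁻¹ f)(y) = w y · f(φ y) / ∑_{z ∈ φ⁻¹(φ y)} |w z|²`.
-/

open ContinuousLinearMap

local notation "ℓ²(" X ")" => lp (fun _ : X => ℂ) 2

theorem lp.apply_eq_div_of_diagonal_rightInverse {X 𝕜 : Type*} [NormedField 𝕜] {p : ENNReal}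
    {A B : lp (fun _ : X => 𝕜) p → lp (fun _ : X => 𝕜) p} {d : X → 𝕜}
    (hA : ∀ g x, A g x = d x * g x) (hAB : ∀ f, A (B f) = f) (f : lp (fun _ : X => 𝕜) p) (x : X) :
    B f x = f x / d x := by
  classical
  have hd : ∀ f x, d x * B f x = f x := fun f x => by rw [← hA, hAB]
  have hdx : d x ≠ 0 := by
    intro h0
    simpa [h0] using hd (lp.single p x 1) x
  rw [eq_div_iff hdx, mul_comm, hd]

theorem lp.adjoint_mul_self_apply_eq_inner {X : Type*} [DecidableEq X] (C : ℓ²(X) →L[ℂ] ℓ²(X))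
    (g : ℓ²(X)) (x : X) :
    (adjoint C * C) g x = inner ℂ (C (lp.single 2 x 1)) (C g) := by
  rw [← adjoint_inner_right, lp.inner_single_left, RCLike.inner_apply, map_one, mul_one]
  rfl

/-- `‖C_{φ,w} e_x‖²`. -/
noncomputable def fiberWeight {X : Type*} (φ : X → X) (w : X → ℂ) (x : X) : ℝ :=
  ∑' z : {z : X // φ z = x}, ‖w z‖ ^ 2

theorem weightedComposition_adjoint_mul_self_apply {X : Type*} {φ : X → X} {w : X → ℂ}
    {C : ℓ²(X) →L[ℂ] ℓ²(X)} (hC : ∀ f y, C f y = w y * f (φ y)) (g : ℓ²(X)) (x : X) :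
    (adjoint C * C) g x = fiberWeight φ w x * g x := by
  classical
  have hterm : ∀ y, inner ℂ (C (lp.single 2 x 1) y) (C g y) =
      {z | φ z = x}.indicator (fun z => ((‖w z‖ ^ 2 : ℝ) : ℂ)) y * g x := by
    intro y
    by_cases hy : φ y = x
    · rw [RCLike.inner_apply, hC, hC, hy, lp.single_apply_self, mul_one, mul_right_comm,
        RCLike.mul_conj, Set.indicator_of_mem (show y ∈ {z | φ z = x} from hy), Complex.ofReal_pow]
      rfl
    · rw [hC, lp.single_apply_ne _ _ _ hy,
        Set.indicator_of_notMem (show y ∉ {z | φ z = x} from hy)]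
      simp
  rw [lp.adjoint_mul_self_apply_eq_inner, lp.inner_eq_tsum, tsum_congr hterm, tsum_mul_right,
    fiberWeight, Complex.ofReal_tsum, ← tsum_subtype]
  rfl

theorem cauchyDual_weighted_composition_apply_general
    {X : Type*} (φ : X → X) (w : X → ℂ)
    (C B : lp (fun _ : X => ℂ) 2 →L[ℂ] lp (fun _ : X => ℂ) 2)
    (hC : ∀ (f : lp (fun _ : X => ℂ) 2) (y : X), C f y = w y * f (φ y))
    (hB1 : ContinuousLinearMap.adjoint C * C * B = 1)
    (f : lp (fun _ : X => ℂ) 2) (y : X) :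
    (C * B) f y =
      (w y / ((∑' z : {z : X // φ z = φ y}, ‖w (z : X)‖ ^ 2 : ℝ) : ℂ)) * f (φ y) := by
  have hBf := lp.apply_eq_div_of_diagonal_rightInverse (A := adjoint C * C) (B := B)
    (weightedComposition_adjoint_mul_self_apply hC) (DFunLike.congr_fun hB1) f (φ y)
  rw [mul_apply_eq_comp, hC, hBf, fiberWeight]
  ring

/-- Let `C_{φ,w}` be a bounded weighted composition operator on `ℓ²(X)`
such that `C*C` is invertible (with inverse `B`).  Then the Cauchy dual
`C' := C (C*C)⁻¹ = C * B` is again a weighted composition operator: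
`(C' f) y = (w y / Σ_{z ∈ φ⁻¹(φ y)} |w z|²) · f (φ y)` for all `f ∈ ℓ²(X)` and `y ∈ X`. -/
theorem cauchyDual_weighted_composition_apply
    {X : Type*} [Countable X] [DecidableEq X] (φ : X → X) (w : X → ℂ)
    (C B : lp (fun _ : X => ℂ) 2 →L[ℂ] lp (fun _ : X => ℂ) 2)
    (hC : ∀ (f : lp (fun _ : X => ℂ) 2) (y : X), C f y = w y * f (φ y))
    (hB1 : ContinuousLinearMap.adjoint C * C * B = 1)
    (hB2 : B * (ContinuousLinearMap.adjoint C * C) = 1)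
    (f : lp (fun _ : X => ℂ) 2) (y : X) :
    (C * B) f y =
      (w y / ((∑' z : {z : X // φ z = φ y}, ‖w (z : X)‖ ^ 2 : ℝ) : ℂ)) * f (φ y) :=
  cauchyDual_weighted_composition_apply_general φ w C B hC hB1 f y
end

section
/- Suppose T is a left-invertible bounded operator on a complex Hilbert space H with Cauchy dual T', and E is a closed subspace of H satisfying condition (LI). If x ∈ H satisfies P_E(T^n x) = 0 and P_E((T'*)^n x) = 0 for every n ∈ ℕ, then x = 0. (Equivalently, the map U sending x to the formal Laurent series Σ_{n≥1}(P_E T^n x) z^{-n} + Σ_{n≥0}(P_E (T'*)^n x) z^n is injective.) -/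
/-!
By adjointness, `P_E (T^n x) = 0` and `P_E ((T'*)^n x) = 0` say that `x` is orthogonal to every
`T*^n e` and `T'^n e` with `e ∈ E`; by (LI) these span a dense subspace, so `x = 0`.
-/

open ContinuousLinearMap
open scoped InnerProductSpace

namespace ContinuousLinearMap

variable {𝕜 H : Type*} [RCLike 𝕜] [NormedAddCommGroup H] [InnerProductSpace 𝕜 H] [CompleteSpace H]

theorem adjoint_pow (A : H →L[𝕜] H) (n : ℕ) : adjoint (A ^ n) = adjoint A ^ n := by
  simp only [← star_eq_adjoint, star_pow]

theorem adjoint_pow_inner_left (A : H →L[𝕜] H) (n : ℕ) (u v : H) :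
    ⟪(adjoint A ^ n) u, v⟫_𝕜 = ⟪u, (A ^ n) v⟫_𝕜 := by
  rw [← adjoint_pow, adjoint_inner_left]

end ContinuousLinearMap

namespace Submodule

variable {𝕜 H : Type*} [RCLike 𝕜] [NormedAddCommGroup H] [InnerProductSpace 𝕜 H] [CompleteSpace H]

theorem eq_zero_of_inner_eq_zero_of_dense_span {s : Set H}
    (hs : (span 𝕜 s).topologicalClosure = ⊤) {x : H} (hx : ∀ u ∈ s, ⟪u, x⟫_𝕜 = 0) : x = 0 := by
  have hxs : x ∈ (span 𝕜 s)ᗮ :=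
    (isOrtho_span.mpr fun u hu v hv => (Set.mem_singleton_iff.mp hv) ▸ hx u hu).symm
      (mem_span_singleton_self x)
  rwa [topologicalClosure_eq_top_iff.mp hs, mem_bot] at hxs

end Submodule

theorem analytic_model_injective_general
    {H : Type*} [NormedAddCommGroup H] [InnerProductSpace ℂ H] [CompleteSpace H]
    (T B : H →L[ℂ] H)
    (E : Submodule ℂ H) [E.HasOrthogonalProjection]
    (hLI : (Submodule.span ℂ {y : H | ∃ e ∈ E, ∃ n : ℕ,
        y = (ContinuousLinearMap.adjoint T ^ n) e ∨ y = ((T * B) ^ n) e}).topologicalClosure = ⊤)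
    (x : H)
    (h1 : ∀ n : ℕ, E.orthogonalProjectionOnto ((T ^ n) x) = 0)
    (h2 : ∀ n : ℕ, E.orthogonalProjectionOnto ((ContinuousLinearMap.adjoint (T * B) ^ n) x) = 0) :
    x = 0 := by
  refine Submodule.eq_zero_of_inner_eq_zero_of_dense_span hLI ?_
  rintro _ ⟨e, he, n, rfl | rfl⟩
  · rw [adjoint_pow_inner_left]
    exact Submodule.orthogonalProjectionOnto_eq_zero_iff.mp (h1 n) e he
  · rw [← adjoint_adjoint (T * B), adjoint_pow_inner_left]
    exact Submodule.orthogonalProjectionOnto_eq_zero_iff.mp (h2 n) e he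

/-- Let `T` be a left-invertible bounded operator on a complex Hilbert
space `H` (i.e. `T*T` is invertible, with inverse `B`), with Cauchy dual `T' = T * B`,
and let `E` be a closed subspace of `H` satisfying condition (LI): the closed linear span
of `{T*^n e : e ∈ E, n ∈ ℕ} ∪ {T'^n e : e ∈ E, n ∈ ℕ}` is all of `H`.
If `x ∈ H` satisfies `P_E (T^n x) = 0` and `P_E ((T'*)^n x) = 0` for every `n`, then `x = 0`. -/
theorem analytic_model_injective
    {H : Type*} [NormedAddCommGroup H] [InnerProductSpace ℂ H] [CompleteSpace H]
    (T B : H →L[ℂ] H)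
    (hB1 : ContinuousLinearMap.adjoint T * T * B = 1)
    (hB2 : B * (ContinuousLinearMap.adjoint T * T) = 1)
    (E : Submodule ℂ H) (hEclosed : IsClosed (E : Set H)) [E.HasOrthogonalProjection]
    (hLI : (Submodule.span ℂ {y : H | ∃ e ∈ E, ∃ n : ℕ,
        y = (ContinuousLinearMap.adjoint T ^ n) e ∨ y = ((T * B) ^ n) e}).topologicalClosure = ⊤)
    (x : H)
    (h1 : ∀ n : ℕ, E.orthogonalProjectionOnto ((T ^ n) x) = 0)
    (h2 : ∀ n : ℕ, E.orthogonalProjectionOnto ((ContinuousLinearMap.adjoint (T * B) ^ n) x) = 0) :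
    x = 0 :=
  analytic_model_injective_general T B E hLI x h1 h2
end

section
/- Suppose T is a left-invertible bounded operator on a complex Hilbert space H with Cauchy dual T', and E is a closed subspace of H satisfying condition (LI). Then for every n ∈ ℕ, the closed linear span of {T*^m (T'^n e) : e ∈ E, m ∈ ℕ} ∪ {T'^m (T'^n e) : e ∈ E, m ∈ ℕ} equals H; that is, [T'^n E]_{T,T'} = H. -/
/-! Since `T* T' = T* T (T* T)⁻¹ = 1`, the Cauchy dual is a right inverse of `T*`, so
`T*^m = T*^(m+n) T'^n`, and `T'^m` equals `T'^(m-n) T'^n` when `n ≤ m` and `T*^(n-m) T'^n`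
when `m < n`. Hence every generator of `[E]_{T,T'}` is a generator of `[T'^n E]_{T,T'}`. -/

section RightInverse

variable {M X : Type*} [Monoid M] [MulAction M X] {a c : M}

theorem pow_add_mul_pow_of_mul_eq_one (h : a * c = 1) (m k : ℕ) :
    a ^ (m + k) * c ^ k = a ^ m := by
  rw [pow_add, mul_assoc, pow_mul_pow_eq_one k h, mul_one]

theorem pow_mul_pow_add_of_mul_eq_one (h : a * c = 1) (m k : ℕ) :
    a ^ k * c ^ (k + m) = c ^ m := by
  rw [pow_add, ← mul_assoc, pow_mul_pow_eq_one k h, one_mul]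

theorem powOrbits_subset_powOrbits_pow_smul_of_mul_eq_one (h : a * c = 1) (S : Set X) (n : ℕ) :
    {y | ∃ e ∈ S, ∃ m : ℕ, y = a ^ m • e ∨ y = c ^ m • e} ⊆
      {y | ∃ e ∈ S, ∃ m : ℕ, y = a ^ m • c ^ n • e ∨ y = c ^ m • c ^ n • e} := by
  rintro y ⟨e, he, m, rfl | rfl⟩
  · exact ⟨e, he, m + n, Or.inl (by rw [smul_smul, pow_add_mul_pow_of_mul_eq_one h])⟩
  · rcases le_total n m with hnm | hmn
    · obtain ⟨k, rfl⟩ := Nat.exists_eq_add_of_le hnm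
      exact ⟨e, he, k, Or.inr (by rw [smul_smul, ← pow_add, add_comm])⟩
    · obtain ⟨k, rfl⟩ := Nat.exists_eq_add_of_le hmn
      exact ⟨e, he, k, Or.inl (by rw [smul_smul, ← pow_mul_pow_add_of_mul_eq_one h m k,
        add_comm m k])⟩

end RightInverse

theorem span_cauchyDual_pow_image_general
    {H : Type*} [NormedAddCommGroup H] [InnerProductSpace ℂ H] [CompleteSpace H]
    (T B : H →L[ℂ] H)
    (hB1 : ContinuousLinearMap.adjoint T * T * B = 1)
    (E : Submodule ℂ H)
    (hLI : (Submodule.span ℂ {y : H | ∃ e ∈ E, ∃ m : ℕ,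
        y = (ContinuousLinearMap.adjoint T ^ m) e ∨ y = ((T * B) ^ m) e}).topologicalClosure = ⊤)
    (n : ℕ) :
    (Submodule.span ℂ {y : H | ∃ e ∈ E, ∃ m : ℕ,
        y = (ContinuousLinearMap.adjoint T ^ m) (((T * B) ^ n) e) ∨
        y = ((T * B) ^ m) (((T * B) ^ n) e)}).topologicalClosure = ⊤ := by
  have hright : ContinuousLinearMap.adjoint T * (T * B) = 1 := by rw [← mul_assoc, hB1]
  refine top_unique (hLI ▸ Submodule.topologicalClosure_mono (Submodule.span_mono ?_))
  exact powOrbits_subset_powOrbits_pow_smul_of_mul_eq_one hright (E : Set H) n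

/-- Let `T` be a left-invertible bounded operator on a complex Hilbert
space `H` (i.e. `T*T` invertible, with inverse `B`), with Cauchy dual `T' = T * B`, and
let `E` be a closed subspace of `H` satisfying condition (LI).  Then for every `n ∈ ℕ`,
the closed linear span of `{T*^m (T'^n e)} ∪ {T'^m (T'^n e)}` (over `e ∈ E`, `m ∈ ℕ`)
equals `H`, i.e. `[T'^n E]_{T,T'} = H`. -/
theorem span_cauchyDual_pow_image
    {H : Type*} [NormedAddCommGroup H] [InnerProductSpace ℂ H] [CompleteSpace H]
    (T B : H →L[ℂ] H)
    (hB1 : ContinuousLinearMap.adjoint T * T * B = 1)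
    (hB2 : B * (ContinuousLinearMap.adjoint T * T) = 1)
    (E : Submodule ℂ H) (hEclosed : IsClosed (E : Set H))
    (hLI : (Submodule.span ℂ {y : H | ∃ e ∈ E, ∃ m : ℕ,
        y = (ContinuousLinearMap.adjoint T ^ m) e ∨ y = ((T * B) ^ m) e}).topologicalClosure = ⊤)
    (n : ℕ) :
    (Submodule.span ℂ {y : H | ∃ e ∈ E, ∃ m : ℕ,
        y = (ContinuousLinearMap.adjoint T ^ m) (((T * B) ^ n) e) ∨
        y = ((T * B) ^ m) (((T * B) ^ n) e)}).topologicalClosure = ⊤ :=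
  span_cauchyDual_pow_image_general T B hB1 E hLI n
end

section
/- Let T be a left-invertible bounded operator on a complex Hilbert space H with Cauchy dual T', and let E be a closed subspace of H satisfying condition (prep): E ⊥ T^n E and E ⊥ T'^n E for every n ≥ 1. Then for all e₀, e₁ ∈ E and all n, m ∈ ℕ: ⟨T^n e₀, T'^m e₁⟩ = ⟨e₀, e₁⟩ if n = m, and ⟨T^n e₀, T'^m e₁⟩ = 0 if n ≠ m. -/
open ContinuousLinearMap
open scoped ComplexInnerProductSpace

/-!
Since `T* T' = 1`, we have `⟨T u, T' v⟩ = ⟨u, v⟩`, so common powers of `T` and `T'` cancel.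
This reduces `⟨T^n e₀, T'^m e₁⟩` to `⟨e₀, T'^(m-n) e₁⟩` or `⟨T^(n-m) e₀, e₁⟩`, which vanishes
by (prep) unless `n = m`.
-/

section

variable {𝕜 H : Type*} [RCLike 𝕜] [NormedAddCommGroup H] [InnerProductSpace 𝕜 H]

theorem inner_pow_add_pow_add {T S : H →L[𝕜] H}
    (hTS : ∀ u v, inner 𝕜 (T u) (S v) = inner 𝕜 u v) (x y : H) (a b k : ℕ) :
    inner 𝕜 ((T ^ (k + a)) x) ((S ^ (k + b)) y) = inner 𝕜 ((T ^ a) x) ((S ^ b) y) := by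
  induction k with
  | zero => simp
  | succ k ih =>
    rw [add_right_comm k 1 a, add_right_comm k 1 b, pow_succ', pow_succ', mul_apply_eq_comp,
      mul_apply_eq_comp, hTS, ih]

theorem inner_apply_cauchyDual_apply [CompleteSpace H] {T B : H →L[𝕜] H}
    (hB : adjoint T * T * B = 1) (u v : H) : inner 𝕜 (T u) ((T * B) v) = inner 𝕜 u v := by
  rw [← adjoint_inner_right, ← mul_apply_eq_comp, ← mul_assoc, hB, one_apply_eq_self]

end

theorem inner_pow_cauchyDual_pow_general
    {H : Type*} [NormedAddCommGroup H] [InnerProductSpace ℂ H] [CompleteSpace H]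
    (T B : H →L[ℂ] H)
    (hB1 : ContinuousLinearMap.adjoint T * T * B = 1)
    (E : Submodule ℂ H)
    (hprep : ∀ e ∈ E, ∀ f ∈ E, ∀ n : ℕ, 1 ≤ n →
      ⟪e, (T ^ n) f⟫ = 0 ∧ ⟪e, ((T * B) ^ n) f⟫ = 0)
    (e₀ e₁ : H) (he₀ : e₀ ∈ E) (he₁ : e₁ ∈ E) (n m : ℕ) :
    ⟪(T ^ n) e₀, ((T * B) ^ m) e₁⟫ = if n = m then ⟪e₀, e₁⟫ else 0 := by
  have cancel := inner_pow_add_pow_add (inner_apply_cauchyDual_apply hB1) e₀ e₁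
  rcases Nat.le_total n m with hnm | hmn
  · obtain ⟨d, rfl⟩ := Nat.exists_eq_add_of_le hnm
    rw [show (T ^ n) e₀ = (T ^ (n + 0)) e₀ from rfl, cancel]
    rcases d with _ | d
    · simp
    · rw [pow_zero, one_apply_eq_self, (hprep e₀ he₀ e₁ he₁ (d + 1) d.succ_pos).2,
        if_neg (by omega)]
  · obtain ⟨d, rfl⟩ := Nat.exists_eq_add_of_le hmn
    rw [show ((T * B) ^ m) e₁ = ((T * B) ^ (m + 0)) e₁ from rfl, cancel]
    rcases d with _ | d
    · simp
    · rw [pow_zero, one_apply_eq_self, ← inner_conj_symm,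
        (hprep e₁ he₁ e₀ he₀ (d + 1) d.succ_pos).1, map_zero, if_neg (by omega)]

/-- Let `T` be a left-invertible bounded operator on a complex Hilbert
space `H` (i.e. `T*T` invertible, with inverse `B`), with Cauchy dual `T' = T * B`, and
let `E` be a closed subspace of `H` satisfying condition (prep): `E ⊥ T^n E` and
`E ⊥ T'^n E` for every `n ≥ 1`.  Then for all `e₀, e₁ ∈ E` and `n, m ∈ ℕ`,
`⟨T^n e₀, T'^m e₁⟩ = ⟨e₀, e₁⟩` if `n = m` and `⟨T^n e₀, T'^m e₁⟩ = 0` otherwise. -/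
theorem inner_pow_cauchyDual_pow
    {H : Type*} [NormedAddCommGroup H] [InnerProductSpace ℂ H] [CompleteSpace H]
    (T B : H →L[ℂ] H)
    (hB1 : ContinuousLinearMap.adjoint T * T * B = 1)
    (hB2 : B * (ContinuousLinearMap.adjoint T * T) = 1)
    (E : Submodule ℂ H) (hEclosed : IsClosed (E : Set H))
    (hprep : ∀ e ∈ E, ∀ f ∈ E, ∀ n : ℕ, 1 ≤ n →
      ⟪e, (T ^ n) f⟫ = 0 ∧ ⟪e, ((T * B) ^ n) f⟫ = 0)
    (e₀ e₁ : H) (he₀ : e₀ ∈ E) (he₁ : e₁ ∈ E) (n m : ℕ) :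
    ⟪(T ^ n) e₀, ((T * B) ^ m) e₁⟫ = if n = m then ⟪e₀, e₁⟫ else 0 :=
  inner_pow_cauchyDual_pow_general T B hB1 E hprep e₀ e₁ he₀ he₁ n m
end

section
/- Suppose T is a left-invertible bounded operator on a complex Hilbert space H with Cauchy dual T', and E is a closed subspace of H satisfying condition (LI). Set r⁺ := liminf_{n→∞} ‖P_E ∘ (T'*)^n‖^{-1/n} and r⁻ := limsup_{n→∞} ‖P_E ∘ T^n‖^{1/n}, and assume r⁺ > r⁻. Then for every x ∈ H and every z ∈ ℂ with r⁻ < |z| < r⁺, the series Σ_{n≥1} (P_E T^n x) z^{-n} and Σ_{n≥0} (P_E (T'*)^n x) z^n converge absolutely in H, and the function U_x(z) := Σ_{n≥1}(P_E T^n x) z^{-n} + Σ_{n≥0}(P_E (T'*)^n x) z^n is analytic (complex differentiable) on the open annulus {z ∈ ℂ : r⁻ < |z| < r⁺}. -/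
/-!
Both series are controlled by root tests on the operator norms, since
`‖P_E T^n x‖ ≤ ‖P_E T^n‖ ‖x‖`. For `r⁻ < ρ < |z|` eventually `‖P_E T^n‖ ≤ ρ^n`, so the
first series is dominated by a geometric series of ratio `ρ / |z|`; for `|z| < σ < r⁺`
eventually `‖P_E (T'*)^n‖ σ^n ≤ 1`, giving ratio `|z| / σ` for the second. These bounds are
uniform on the smaller annulus `ρ < |w| < σ`, so the Weierstrass M-test makes each sum
holomorphic there.
-/

open ContinuousLinearMap Filter

section RootTest

variable {v : ℕ → ℝ}

lemma isBoundedUnder_root_of_le_pow {C : ℝ} (hC : 0 ≤ C) (hv0 : ∀ n, 0 ≤ v n)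
    (hv : ∀ n, v n ≤ C ^ n) :
    IsBoundedUnder (· ≤ ·) atTop fun n : ℕ => v n ^ ((1 : ℝ) / n) := by
  refine isBoundedUnder_of_eventually_le (a := C) ?_
  filter_upwards [eventually_gt_atTop 0] with n hn
  calc v n ^ ((1 : ℝ) / n) ≤ (C ^ n) ^ ((1 : ℝ) / n) :=
        Real.rpow_le_rpow (hv0 n) (hv n) (by positivity)
    _ = C := by rw [one_div, Real.pow_rpow_inv_natCast hC hn.ne']

lemma limsup_root_nonneg (hv0 : ∀ n, 0 ≤ v n)
    (hbdd : IsBoundedUnder (· ≤ ·) atTop fun n : ℕ => v n ^ ((1 : ℝ) / n)) :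
    0 ≤ limsup (fun n : ℕ => v n ^ ((1 : ℝ) / n)) atTop :=
  le_limsup_of_frequently_le (Frequently.of_forall fun n => Real.rpow_nonneg (hv0 n) _) hbdd

lemma eventually_le_pow_of_limsup_root_lt (hv0 : ∀ n, 0 ≤ v n)
    (hbdd : IsBoundedUnder (· ≤ ·) atTop fun n : ℕ => v n ^ ((1 : ℝ) / n)) {ρ : ℝ}
    (hρ : limsup (fun n : ℕ => v n ^ ((1 : ℝ) / n)) atTop < ρ) :
    ∀ᶠ n in atTop, v n ≤ ρ ^ n := by
  have hρ0 : 0 ≤ ρ := (limsup_root_nonneg hv0 hbdd).trans hρ.le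
  filter_upwards [eventually_lt_of_limsup_lt hρ hbdd, eventually_gt_atTop 0] with n hroot hn
  rw [one_div, Real.rpow_inv_lt_iff_of_pos (hv0 n) hρ0 (by positivity), Real.rpow_natCast]
    at hroot
  exact hroot.le

lemma summable_mul_inv_pow_of_limsup_root_lt (hv0 : ∀ n, 0 ≤ v n)
    (hbdd : IsBoundedUnder (· ≤ ·) atTop fun n : ℕ => v n ^ ((1 : ℝ) / n)) {r : ℝ}
    (hr : limsup (fun n : ℕ => v n ^ ((1 : ℝ) / n)) atTop < r) :
    Summable fun n => v n * r⁻¹ ^ n := by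
  obtain ⟨ρ, hρ, hρr⟩ := exists_between hr
  have hρ0 : 0 ≤ ρ := (limsup_root_nonneg hv0 hbdd).trans hρ.le
  have hr0 : 0 < r := hρ0.trans_lt hρr
  refine .of_norm_bounded_eventually_nat
    (summable_geometric_of_lt_one (div_nonneg hρ0 hr0.le) ((div_lt_one hr0).2 hρr)) ?_
  filter_upwards [eventually_le_pow_of_limsup_root_lt hv0 hbdd hρ] with n hn
  rw [Real.norm_of_nonneg (mul_nonneg (hv0 n) (pow_nonneg (inv_nonneg.2 hr0.le) n)), div_pow,
    div_eq_mul_inv, inv_pow]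
  gcongr

lemma eventually_mul_pow_le_one_of_lt_liminf_root_neg (hv0 : ∀ n, 0 ≤ v n) {σ : ℝ}
    (hσ0 : 0 ≤ σ) (hσ : σ < liminf (fun n : ℕ => v n ^ (-(1 : ℝ) / n)) atTop) :
    ∀ᶠ n in atTop, v n * σ ^ n ≤ 1 := by
  have hbdd : IsBoundedUnder (· ≥ ·) atTop fun n : ℕ => v n ^ (-(1 : ℝ) / n) :=
    isBoundedUnder_of ⟨0, fun n => Real.rpow_nonneg (hv0 n) _⟩
  filter_upwards [eventually_lt_of_lt_liminf hσ hbdd, eventually_gt_atTop 0] with n hroot hn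
  rw [neg_div, one_div, Real.rpow_neg (hv0 n), ← Real.inv_rpow (hv0 n),
    Real.lt_rpow_inv_iff_of_pos hσ0 (inv_nonneg.2 (hv0 n)) (by positivity),
    Real.rpow_natCast] at hroot
  rcases (hv0 n).eq_or_lt with hzero | hpos
  · simp [← hzero]
  · calc v n * σ ^ n ≤ v n * (v n)⁻¹ := by gcongr
      _ = 1 := mul_inv_cancel₀ hpos.ne'

lemma summable_mul_pow_of_lt_liminf_root_neg (hv0 : ∀ n, 0 ≤ v n) {r : ℝ} (hr0 : 0 ≤ r)
    (hr : r < liminf (fun n : ℕ => v n ^ (-(1 : ℝ) / n)) atTop) :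
    Summable fun n => v n * r ^ n := by
  obtain ⟨σ, hrσ, hσ⟩ := exists_between hr
  have hσ0 : 0 < σ := hr0.trans_lt hrσ
  refine .of_norm_bounded_eventually_nat
    (summable_geometric_of_lt_one (div_nonneg hr0 hσ0.le) ((div_lt_one hσ0).2 hrσ)) ?_
  filter_upwards [eventually_mul_pow_le_one_of_lt_liminf_root_neg hv0 hσ0.le hσ] with n hn
  rw [Real.norm_of_nonneg (mul_nonneg (hv0 n) (pow_nonneg hr0 n)), div_pow]
  calc v n * r ^ n = (v n * σ ^ n) * (r ^ n / σ ^ n) := by field_simp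
    _ ≤ 1 * (r ^ n / σ ^ n) :=
        mul_le_mul_of_nonneg_right hn (div_nonneg (pow_nonneg hr0 n) (pow_nonneg hσ0.le n))
    _ = r ^ n / σ ^ n := one_mul _

end RootTest

section Operators

variable {𝕜 E F : Type*} [NontriviallyNormedField 𝕜] [NormedAddCommGroup E] [NormedSpace 𝕜 E]
  [NormedAddCommGroup F] [NormedSpace 𝕜 F]

lemma ContinuousLinearMap.norm_comp_pow_le {Q : E →L[𝕜] F} (hQ : ‖Q‖ ≤ 1) (S : E →L[𝕜] E)
    (n : ℕ) : ‖Q ∘L S ^ n‖ ≤ ‖S‖ ^ n := by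
  rcases Nat.eq_zero_or_pos n with rfl | hn
  · rwa [pow_zero, one_def, comp_id]
  · calc ‖Q ∘L S ^ n‖ ≤ ‖Q‖ * ‖S ^ n‖ := opNorm_comp_le _ _
      _ ≤ 1 * ‖S‖ ^ n := by gcongr; exact norm_pow_le' S hn
      _ = ‖S‖ ^ n := one_mul _

lemma summable_norm_apply_mul {L : ℕ → E →L[𝕜] F} {c : ℕ → ℝ} (hc : ∀ n, 0 ≤ c n)
    (hL : Summable fun n => ‖L n‖ * c n) (x : E) : Summable fun n => ‖L n x‖ * c n :=
  (hL.mul_right ‖x‖).of_nonneg_of_le (fun n => mul_nonneg (norm_nonneg _) (hc n)) fun n =>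
    calc ‖L n x‖ * c n ≤ ‖L n‖ * ‖x‖ * c n := by gcongr; exacts [hc n, (L n).le_opNorm x]
      _ = ‖L n‖ * c n * ‖x‖ := by ring

end Operators

section Laurent

variable {F : Type*} [NormedAddCommGroup F] [NormedSpace ℂ F] [CompleteSpace F]

lemma differentiableOn_tsum_pow_smul {a : ℕ → F} {R : ℝ}
    (ha : ∀ r, 0 ≤ r → r < R → Summable fun n => ‖a n‖ * r ^ n) :
    DifferentiableOn ℂ (fun z : ℂ => ∑' n, z ^ n • a n) {z | ‖z‖ < R} := by
  intro z hz
  obtain ⟨r, hzr, hrR⟩ := exists_between (show ‖z‖ < R from hz)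
  have hU : IsOpen {w : ℂ | ‖w‖ < r} := isOpen_lt continuous_norm continuous_const
  have hdiff : DifferentiableOn ℂ (fun w : ℂ => ∑' n, w ^ n • a n) {w | ‖w‖ < r} := by
    refine Complex.differentiableOn_tsum_of_summable_norm (ha r ((norm_nonneg z).trans hzr.le) hrR)
      (fun n => ((differentiable_pow n).smul_const (a n)).differentiableOn) hU fun n w hw => ?_
    rw [norm_smul, norm_pow, mul_comm]
    gcongr
    exact le_of_lt hw
  exact (hdiff.differentiableAt (hU.mem_nhds hzr)).differentiableWithinAt

lemma differentiableOn_tsum_inv_pow_smul {b : ℕ → F} {R : ℝ} (hR : 0 ≤ R)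
    (hb : ∀ r, R < r → Summable fun n => ‖b n‖ * r⁻¹ ^ (n + 1)) :
    DifferentiableOn ℂ (fun z : ℂ => ∑' n, (z ^ (n + 1))⁻¹ • b n) {z | R < ‖z‖} := by
  intro z hz
  obtain ⟨r, hRr, hrz⟩ := exists_between (show R < ‖z‖ from hz)
  have hr0 : 0 < r := hR.trans_lt hRr
  have hU : IsOpen {w : ℂ | r < ‖w‖} := isOpen_lt continuous_const continuous_norm
  have hdiff : DifferentiableOn ℂ (fun w : ℂ => ∑' n, (w ^ (n + 1))⁻¹ • b n) {w | r < ‖w‖} := by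
    refine Complex.differentiableOn_tsum_of_summable_norm (hb r hRr) (fun n => ?_) hU fun n w hw => ?_
    · refine (((differentiable_pow (n + 1)).differentiableOn).inv fun w hw => ?_).smul_const (b n)
      exact pow_ne_zero _ (norm_pos_iff.1 (hr0.trans hw))
    · rw [norm_smul, norm_inv, norm_pow, ← inv_pow, mul_comm]
      gcongr
      exact le_of_lt hw
  exact (hdiff.differentiableAt (hU.mem_nhds hrz)).differentiableWithinAt

end Laurent

theorem analytic_model_convergence_on_annulus_general
    {H : Type*} [NormedAddCommGroup H] [InnerProductSpace ℂ H] [CompleteSpace H]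
    (T B : H →L[ℂ] H)
    (E : Submodule ℂ H) [E.HasOrthogonalProjection]
    (rp rm : ℝ)
    (hrp : rp = liminf (fun n : ℕ =>
      ‖(E.subtypeL ∘L E.orthogonalProjectionOnto) ∘L (ContinuousLinearMap.adjoint (T * B) ^ n)‖
        ^ (-(1 : ℝ) / n)) atTop)
    (hrm : rm = limsup (fun n : ℕ =>
      ‖(E.subtypeL ∘L E.orthogonalProjectionOnto) ∘L (T ^ n)‖ ^ ((1 : ℝ) / n)) atTop) :
    (∀ (x : H) (z : ℂ), rm < ‖z‖ → ‖z‖ < rp →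
      Summable (fun n : ℕ =>
        ‖(E.orthogonalProjectionOnto ((T ^ (n + 1)) x) : H)‖ * ‖z‖⁻¹ ^ (n + 1)) ∧
      Summable (fun n : ℕ =>
        ‖(E.orthogonalProjectionOnto ((ContinuousLinearMap.adjoint (T * B) ^ n) x) : H)‖ * ‖z‖ ^ n)) ∧
    ∀ x : H, DifferentiableOn ℂ
      (fun z : ℂ =>
        (∑' n : ℕ, (z ^ (n + 1))⁻¹ • (E.orthogonalProjectionOnto ((T ^ (n + 1)) x) : H)) +
        ∑' n : ℕ, z ^ n • (E.orthogonalProjectionOnto ((ContinuousLinearMap.adjoint (T * B) ^ n) x) : H))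
      {z : ℂ | rm < ‖z‖ ∧ ‖z‖ < rp} := by
  set P : H →L[ℂ] H := E.subtypeL ∘L E.orthogonalProjectionOnto
  have hbdd : IsBoundedUnder (· ≤ ·) atTop fun n : ℕ => ‖P ∘L T ^ n‖ ^ ((1 : ℝ) / n) :=
    isBoundedUnder_root_of_le_pow (norm_nonneg T) (fun n => norm_nonneg _)
      (norm_comp_pow_le E.starProjection_norm_le T)
  have hrm0 : 0 ≤ rm := hrm ▸ limsup_root_nonneg (fun n => norm_nonneg _) hbdd
  have hT : ∀ x r, rm < r → Summable fun n : ℕ =>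
      ‖(E.orthogonalProjectionOnto ((T ^ (n + 1)) x) : H)‖ * r⁻¹ ^ (n + 1) := fun x r hr =>
    (summable_nat_add_iff 1).2 <|
      summable_norm_apply_mul (L := fun n => P ∘L T ^ n)
        (fun n => pow_nonneg (inv_nonneg.2 (hrm0.trans hr.le)) n)
        (summable_mul_inv_pow_of_limsup_root_lt (fun n => norm_nonneg _) hbdd (hrm ▸ hr)) x
  have hA : ∀ x r, 0 ≤ r → r < rp → Summable fun n : ℕ =>
      ‖(E.orthogonalProjectionOnto ((adjoint (T * B) ^ n) x) : H)‖ * r ^ n := fun x r hr0 hr =>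
    summable_norm_apply_mul (L := fun n => P ∘L adjoint (T * B) ^ n) (fun n => pow_nonneg hr0 n)
      (summable_mul_pow_of_lt_liminf_root_neg (fun n => norm_nonneg _) hr0 (hrp ▸ hr)) x
  refine ⟨fun x z hz₁ hz₂ => ⟨hT x _ hz₁, hA x _ (norm_nonneg z) hz₂⟩, fun x => ?_⟩
  exact ((differentiableOn_tsum_inv_pow_smul hrm0 (hT x)).mono fun z hz => hz.1).add
    ((differentiableOn_tsum_pow_smul (hA x)).mono fun z hz => hz.2)

/-- Let `T` be a left-invertible bounded operator on a complex Hilbert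
space `H` (i.e. `T*T` invertible, with inverse `B`), with Cauchy dual `T' = T * B`, and
let `E` be a closed subspace of `H` satisfying condition (LI).  Set
`r⁺ = liminf ‖P_E (T'*)^n‖^{-1/n}` and `r⁻ = limsup ‖P_E T^n‖^{1/n}`, and assume
`r⁻ < r⁺`.  Then for every `x ∈ H` and `z` with `r⁻ < |z| < r⁺` the two series of the
model converge absolutely, and `z ↦ U_x(z)` is analytic on the open annulus. -/
theorem analytic_model_convergence_on_annulus
    {H : Type*} [NormedAddCommGroup H] [InnerProductSpace ℂ H] [CompleteSpace H]
    (T B : H →L[ℂ] H)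
    (hB1 : ContinuousLinearMap.adjoint T * T * B = 1)
    (hB2 : B * (ContinuousLinearMap.adjoint T * T) = 1)
    (E : Submodule ℂ H) (hEclosed : IsClosed (E : Set H)) [E.HasOrthogonalProjection]
    (hLI : (Submodule.span ℂ {y : H | ∃ e ∈ E, ∃ n : ℕ,
        y = (ContinuousLinearMap.adjoint T ^ n) e ∨ y = ((T * B) ^ n) e}).topologicalClosure = ⊤)
    (rp rm : ℝ)
    (hrp : rp = liminf (fun n : ℕ =>
      ‖(E.subtypeL ∘L E.orthogonalProjectionOnto) ∘L (ContinuousLinearMap.adjoint (T * B) ^ n)‖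
        ^ (-(1 : ℝ) / n)) atTop)
    (hrm : rm = limsup (fun n : ℕ =>
      ‖(E.subtypeL ∘L E.orthogonalProjectionOnto) ∘L (T ^ n)‖ ^ ((1 : ℝ) / n)) atTop)
    (h : rm < rp) :
    (∀ (x : H) (z : ℂ), rm < ‖z‖ → ‖z‖ < rp →
      Summable (fun n : ℕ =>
        ‖(E.orthogonalProjectionOnto ((T ^ (n + 1)) x) : H)‖ * ‖z‖⁻¹ ^ (n + 1)) ∧
      Summable (fun n : ℕ =>
        ‖(E.orthogonalProjectionOnto ((ContinuousLinearMap.adjoint (T * B) ^ n) x) : H)‖ * ‖z‖ ^ n)) ∧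
    ∀ x : H, DifferentiableOn ℂ
      (fun z : ℂ =>
        (∑' n : ℕ, (z ^ (n + 1))⁻¹ • (E.orthogonalProjectionOnto ((T ^ (n + 1)) x) : H)) +
        ∑' n : ℕ, z ^ n • (E.orthogonalProjectionOnto ((ContinuousLinearMap.adjoint (T * B) ^ n) x) : H))
      {z : ℂ | rm < ‖z‖ ∧ ‖z‖ < rp} :=
  analytic_model_convergence_on_annulus_general T B E rp rm hrp hrm
end

section
/- Suppose T is a left-invertible bounded operator on a complex Hilbert space H with Cauchy dual T', and E is a closed subspace of H satisfying condition (LI). Assume there exists z ∈ ℂ, z ≠ 0, such that for every x ∈ H the series Σ_{n≥1} ‖P_E T^n x‖ |z|^{-n} and Σ_{n≥0} ‖P_E (T'*)^n x‖ |z|^n both converge. Then the point spectrum of T is empty: T has no eigenvalues. -/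
/-!
If `T x = μ • x` with `x ≠ 0`, then `μ ≠ 0` because `T` is left-invertible, and `x` is an
eigenvector of `T'*`, a left inverse of `T`, with eigenvalue `μ⁻¹`. Hence the two series at `x`
are `‖P_E x‖` times geometric series of ratios `|μ|/|z|` and `|z|/|μ|`; they cannot both converge,
so `P_E x = 0`. Then `⟪x, T*ⁿ e⟫ = ⟪Tⁿ x, e⟫` and `⟪x, T'ⁿ e⟫ = ⟪T'*ⁿ x, e⟫` vanish for `e ∈ E`,
so `x` is orthogonal to a set with dense span, i.e. `x = 0`.
-/

open ContinuousLinearMap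

section Eigenvector

variable {𝕜 E : Type*} [Field 𝕜] [TopologicalSpace E] [AddCommGroup E] [Module 𝕜 E]

theorem ContinuousLinearMap.pow_apply_of_apply_eq_smul {T : E →L[𝕜] E} {μ : 𝕜} {x : E}
    (hx : T x = μ • x) (n : ℕ) : (T ^ n) x = μ ^ n • x := by
  induction n with
  | zero => simp
  | succ n ih => rw [pow_succ', mul_apply_eq_comp, ih, map_smul, hx, smul_smul, pow_succ]

theorem ContinuousLinearMap.leftInverse_of_mul_eq_one {L T : E →L[𝕜] E} (hLT : L * T = 1) :
    Function.LeftInverse L T := fun x => by rw [← mul_apply_eq_comp, hLT, one_apply_eq_self]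

theorem ContinuousLinearMap.apply_eq_inv_smul_of_mul_eq_one {L T : E →L[𝕜] E} (hLT : L * T = 1)
    {μ : 𝕜} (hμ : μ ≠ 0) {x : E} (hx : T x = μ • x) : L x = μ⁻¹ • x := by
  have hLTx := leftInverse_of_mul_eq_one hLT x
  rw [hx, map_smul] at hLTx
  rwa [eq_inv_smul_iff₀ hμ]

end Eigenvector

theorem lt_one_of_summable_mul_pow {a q : ℝ} (ha : a ≠ 0) (hq : 0 ≤ q)
    (h : Summable fun n : ℕ => a * q ^ n) : q < 1 := by
  have := summable_geometric_iff_norm_lt_one.mp ((summable_mul_left_iff ha).mp h)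
  rwa [Real.norm_of_nonneg hq] at this

theorem norm_mul_lt_one_of_summable_norm_pow_apply
    {𝕜 E F : Type*} [NormedField 𝕜] [NormedAddCommGroup E] [NormedSpace 𝕜 E]
    [NormedAddCommGroup F] [NormedSpace 𝕜 F] {T : E →L[𝕜] E} {P : E →L[𝕜] F} {μ : 𝕜} {x : E}
    {r : ℝ} (hr : 0 ≤ r) (hx : T x = μ • x) (hPx : P x ≠ 0)
    (h : Summable fun n : ℕ => ‖P ((T ^ n) x)‖ * r ^ n) : ‖μ‖ * r < 1 := by
  refine lt_one_of_summable_mul_pow (norm_ne_zero_iff.mpr hPx) (by positivity) ?_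
  simpa only [T.pow_apply_of_apply_eq_smul hx, map_smul, norm_smul, norm_pow, mul_pow,
    mul_left_comm, mul_assoc] using h

section InnerProductSpace

variable {𝕜 E : Type*} [RCLike 𝕜] [NormedAddCommGroup E] [InnerProductSpace 𝕜 E]

open scoped InnerProductSpace

theorem eq_zero_of_forall_inner_eq_zero_of_dense_span {s : Set E}
    (hs : (Submodule.span 𝕜 s).topologicalClosure = ⊤) {x : E} (hx : ∀ y ∈ s, ⟪x, y⟫_𝕜 = 0) :
    x = 0 := by
  have hspan : Submodule.span 𝕜 s ≤ (𝕜 ∙ x)ᗮ :=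
    Submodule.span_le.mpr fun y hy =>
      Submodule.mem_orthogonal_singleton_iff_inner_right.mpr (hx y hy)
  have hx_mem : x ∈ (𝕜 ∙ x)ᗮ :=
    Submodule.topologicalClosure_minimal _ hspan (Submodule.isClosed_orthogonal _)
      (hs ▸ Submodule.mem_top)
  exact inner_self_eq_zero.mp (Submodule.mem_orthogonal_singleton_iff_inner_right.mp hx_mem)

variable [CompleteSpace E]

theorem ContinuousLinearMap.adjoint_mul_mul_eq_one {T B : E →L[𝕜] E}
    (hB : adjoint T * T * B = 1) : adjoint (T * B) * T = 1 := by
  simpa [← star_eq_adjoint, star_mul, mul_assoc] using congrArg star hB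

theorem ContinuousLinearMap.inner_pow_apply_eq_zero_of_adjoint_apply_eq_smul
    {A : E →L[𝕜] E} {c : 𝕜} {x : E} (hx : adjoint A x = c • x) {K : Submodule 𝕜 E}
    (hxK : x ∈ Kᗮ) {e : E} (he : e ∈ K) (n : ℕ) : ⟪x, (A ^ n) e⟫_𝕜 = 0 := by
  rw [← adjoint_inner_left, ← star_eq_adjoint, star_pow, star_eq_adjoint,
    (adjoint A).pow_apply_of_apply_eq_smul hx, inner_smul_left,
    Submodule.inner_left_of_mem_orthogonal he hxK, mul_zero]

end InnerProductSpace

theorem point_spectrum_empty_general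
    {H : Type*} [NormedAddCommGroup H] [InnerProductSpace ℂ H] [CompleteSpace H]
    (T B : H →L[ℂ] H)
    (hB1 : ContinuousLinearMap.adjoint T * T * B = 1)
    (E : Submodule ℂ H) [E.HasOrthogonalProjection]
    (hLI : (Submodule.span ℂ {y : H | ∃ e ∈ E, ∃ n : ℕ,
        y = (ContinuousLinearMap.adjoint T ^ n) e ∨ y = ((T * B) ^ n) e}).topologicalClosure = ⊤)
    (hconv : ∃ z : ℂ, z ≠ 0 ∧ ∀ x : H,
      Summable (fun n : ℕ =>
        ‖(E.orthogonalProjectionOnto ((T ^ (n + 1)) x) : H)‖ * ‖z‖⁻¹ ^ (n + 1)) ∧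
      Summable (fun n : ℕ =>
        ‖(E.orthogonalProjectionOnto ((ContinuousLinearMap.adjoint (T * B) ^ n) x) : H)‖ * ‖z‖ ^ n)) :
    ∀ (μ : ℂ) (x : H), T x = μ • x → x = 0 := by
  intro μ x hx
  by_contra hx0
  obtain ⟨z, hz, hsum⟩ := hconv
  have hLT := adjoint_mul_mul_eq_one hB1
  have hμ : μ ≠ 0 := by
    rintro rfl
    exact hx0 ((leftInverse_of_mul_eq_one hLT).injective (by rw [hx, zero_smul, map_zero]))
  have hdual : adjoint (T * B) x = μ⁻¹ • x := apply_eq_inv_smul_of_mul_eq_one hLT hμ hx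
  have hxE : x ∈ Eᗮ := by
    rw [← Submodule.starProjection_apply_eq_zero_iff]
    by_contra hPx
    obtain ⟨hs1, hs2⟩ := hsum x
    have hμz : ‖μ‖ * ‖z‖⁻¹ < 1 :=
      norm_mul_lt_one_of_summable_norm_pow_apply (by positivity) hx hPx
        ((summable_nat_add_iff 1).mp hs1)
    have hzμ : ‖μ⁻¹‖ * ‖z‖ < 1 :=
      norm_mul_lt_one_of_summable_norm_pow_apply (norm_nonneg z) hdual hPx hs2
    rw [← div_eq_mul_inv, div_lt_one (norm_pos_iff.mpr hz)] at hμz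
    rw [norm_inv, inv_mul_lt_one₀ (norm_pos_iff.mpr hμ)] at hzμ
    exact hμz.not_gt hzμ
  refine hx0 (eq_zero_of_forall_inner_eq_zero_of_dense_span hLI ?_)
  rintro y ⟨e, he, n, rfl | rfl⟩
  · exact (adjoint T).inner_pow_apply_eq_zero_of_adjoint_apply_eq_smul
      (by rwa [adjoint_adjoint]) hxE he n
  · exact (T * B).inner_pow_apply_eq_zero_of_adjoint_apply_eq_smul hdual hxE he n

/-- Let `T` be a left-invertible bounded operator on a complex Hilbert
space `H` (i.e. `T*T` invertible, with inverse `B`), with Cauchy dual `T' = T * B`, and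
let `E` be a closed subspace satisfying condition (LI).  If there is `z ≠ 0` such that
for every `x` the two series of the analytic model converge absolutely at `z`, then the
point spectrum of `T` is empty: `T` has no eigenvalues. -/
theorem point_spectrum_empty
    {H : Type*} [NormedAddCommGroup H] [InnerProductSpace ℂ H] [CompleteSpace H]
    (T B : H →L[ℂ] H)
    (hB1 : ContinuousLinearMap.adjoint T * T * B = 1)
    (hB2 : B * (ContinuousLinearMap.adjoint T * T) = 1)
    (E : Submodule ℂ H) (hEclosed : IsClosed (E : Set H)) [E.HasOrthogonalProjection]
    (hLI : (Submodule.span ℂ {y : H | ∃ e ∈ E, ∃ n : ℕ,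
        y = (ContinuousLinearMap.adjoint T ^ n) e ∨ y = ((T * B) ^ n) e}).topologicalClosure = ⊤)
    (hconv : ∃ z : ℂ, z ≠ 0 ∧ ∀ x : H,
      Summable (fun n : ℕ =>
        ‖(E.orthogonalProjectionOnto ((T ^ (n + 1)) x) : H)‖ * ‖z‖⁻¹ ^ (n + 1)) ∧
      Summable (fun n : ℕ =>
        ‖(E.orthogonalProjectionOnto ((ContinuousLinearMap.adjoint (T * B) ^ n) x) : H)‖ * ‖z‖ ^ n)) :
    ∀ (μ : ℂ) (x : H), T x = μ • x → x = 0 :=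
  point_spectrum_empty_general T B hB1 E hLI hconv
end

section
/- Let T be a left-invertible bounded operator on a complex Hilbert space H with Cauchy dual T', let e ∈ H and λ ∈ ℂ, λ ≠ 0, and assume the series Σ_{n≥1} ‖T*^n e‖ |λ|^{-n} and Σ_{n≥0} ‖T'^n e‖ |λ|^n converge. Then the vector w := Σ_{n≥1} λ^{-n} T*^n e + Σ_{n≥0} λ^n T'^n e satisfies T* w = λ w. Moreover, if E is a closed subspace of H satisfying condition (prep), e ∈ E and e ≠ 0, then w ≠ 0, so λ is an eigenvalue of T*. -/
open ContinuousLinearMap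
open scoped ComplexInnerProductSpace

/-!
With `A = T*` and `T' = T (T*T)⁻¹` we have `A T' = 1`.  Writing `w = u + v` with
`u = Σ_{n≥0} λ^{-(n+1)} A^{n+1} e` and `v = Σ_{n≥0} λ^n T'^n e`, the terms `aₙ` of `u` satisfy
`A aₙ = λ aₙ₊₁` and the terms `bₙ` of `v` satisfy `A bₙ₊₁ = λ bₙ`.  Shifting the index therefore gives
`A u = λ u - A e` and `A v = A e + λ v`, whose sum is `A w = λ w`.

Under (prep), every term of `u` and every term of `v` except `b₀ = e` is orthogonal to `e`,
since `⟪e, A^n e⟫ = conj ⟪e, T^n e⟫`.  Hence `⟪e, w⟫ = ‖e‖² ≠ 0`.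
-/

theorem mul_pow_succ_of_mul_eq_one {M : Type*} [Monoid M] {a b : M} (h : a * b = 1) (n : ℕ) :
    a * b ^ (n + 1) = b ^ n := by
  rw [pow_succ', ← mul_assoc, h, one_mul]

namespace ContinuousLinearMap

section Shift

variable {R V : Type*} [Semiring R] [AddCommGroup V] [Module R V] [TopologicalSpace V]
  [IsTopologicalAddGroup V] [ContinuousConstSMul R V] [T2Space V]

theorem apply_eq_smul_sub_of_hasSum_of_apply_eq_smul_succ
    (A : V →L[R] V) (c : R) {f : ℕ → V} {u : V} (hf : HasSum f u)
    (hA : ∀ n, A (f n) = c • f (n + 1)) : A u = c • (u - f 0) := by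
  have htail : HasSum (fun n => f (n + 1)) (u - f 0) := by
    simpa using (hasSum_nat_add_iff' 1).mpr hf
  refine (hf.mapL A).unique ?_
  simpa only [hA] using htail.const_smul c

theorem apply_eq_add_smul_of_hasSum_of_apply_succ_eq_smul
    (A : V →L[R] V) (c : R) {f : ℕ → V} {v : V} (hf : HasSum f v)
    (hA : ∀ n, A (f (n + 1)) = c • f n) : A v = A (f 0) + c • v := by
  have htail : HasSum (fun n => A (f (n + 1))) (A v - A (f 0)) := by
    simpa using (hasSum_nat_add_iff' 1).mpr (hf.mapL A)
  rw [← sub_eq_iff_eq_add']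
  refine htail.unique ?_
  simpa only [hA] using hf.const_smul c

end Shift

theorem apply_tsum_add_tsum_eq_smul_of_mul_eq_one {𝕜 V : Type*} [Field 𝕜] [AddCommGroup V]
    [Module 𝕜 V] [TopologicalSpace V] [IsTopologicalAddGroup V] [ContinuousConstSMul 𝕜 V]
    [T2Space V] {A S : V →L[𝕜] V} (hAS : A * S = 1) {c : 𝕜} (hc : c ≠ 0) {e : V}
    (ha : Summable fun n : ℕ => (c ^ (n + 1))⁻¹ • (A ^ (n + 1)) e)
    (hb : Summable fun n : ℕ => c ^ n • (S ^ n) e) :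
    A ((∑' n : ℕ, (c ^ (n + 1))⁻¹ • (A ^ (n + 1)) e) + ∑' n : ℕ, c ^ n • (S ^ n) e) =
      c • ((∑' n : ℕ, (c ^ (n + 1))⁻¹ • (A ^ (n + 1)) e) + ∑' n : ℕ, c ^ n • (S ^ n) e) := by
  have hAu := A.apply_eq_smul_sub_of_hasSum_of_apply_eq_smul_succ c ha.hasSum fun n => by
    rw [map_smul, ← mul_apply_eq_comp, ← pow_succ', smul_smul, pow_succ' c (n + 1), mul_inv,
      ← mul_assoc, mul_inv_cancel₀ hc, one_mul]
  have hAv := A.apply_eq_add_smul_of_hasSum_of_apply_succ_eq_smul c hb.hasSum fun n => by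
    rw [map_smul, ← mul_apply_eq_comp, mul_pow_succ_of_mul_eq_one hAS, smul_smul, pow_succ']
  have hu0 : c • ((c ^ (0 + 1))⁻¹ • (A ^ (0 + 1)) e) = A e := by simp [smul_smul, hc]
  have hv0 : A (c ^ 0 • (S ^ 0) e) = A e := by simp
  rw [map_add, hAu, hAv, smul_sub, smul_add, hu0, hv0]
  abel

theorem inner_adjoint_pow_apply {𝕜 E : Type*} [RCLike 𝕜] [NormedAddCommGroup E]
    [InnerProductSpace 𝕜 E] [CompleteSpace E] (T : E →L[𝕜] E) (n : ℕ) (x y : E) :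
    inner 𝕜 x ((adjoint T ^ n) y) = inner 𝕜 ((T ^ n) x) y := by
  rw [← star_eq_adjoint, ← star_pow, star_eq_adjoint, adjoint_inner_right]

end ContinuousLinearMap

theorem inner_tsum_right {𝕜 E ι : Type*} [RCLike 𝕜] [NormedAddCommGroup E]
    [InnerProductSpace 𝕜 E] {f : ι → E} (hf : Summable f) (x : E) :
    inner 𝕜 x (∑' i, f i) = ∑' i, inner 𝕜 x (f i) :=
  (innerSL 𝕜 x).map_tsum hf

theorem inner_tsum_add_tsum_eq_inner_self {𝕜 E : Type*} [RCLike 𝕜] [NormedAddCommGroup E]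
    [InnerProductSpace 𝕜 E] [CompleteSpace E] (T S : E →L[𝕜] E) (c : 𝕜) {e : E}
    (hT : ∀ n : ℕ, 1 ≤ n → inner 𝕜 e ((T ^ n) e) = 0)
    (hS : ∀ n : ℕ, 1 ≤ n → inner 𝕜 e ((S ^ n) e) = 0)
    (ha : Summable fun n : ℕ => (c ^ (n + 1))⁻¹ • (adjoint T ^ (n + 1)) e)
    (hb : Summable fun n : ℕ => c ^ n • (S ^ n) e) :
    inner 𝕜 e ((∑' n : ℕ, (c ^ (n + 1))⁻¹ • (adjoint T ^ (n + 1)) e) +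
      ∑' n : ℕ, c ^ n • (S ^ n) e) = inner 𝕜 e e := by
  have hea (n : ℕ) : inner 𝕜 e ((c ^ (n + 1))⁻¹ • (adjoint T ^ (n + 1)) e) = 0 := by
    rw [inner_smul_right, inner_adjoint_pow_apply, ← inner_conj_symm,
      hT (n + 1) (Nat.le_add_left 1 n), map_zero, mul_zero]
  have heb (n : ℕ) (hn : n ≠ 0) : inner 𝕜 e (c ^ n • (S ^ n) e) = 0 := by
    rw [inner_smul_right, hS n (Nat.one_le_iff_ne_zero.mpr hn), mul_zero]
  rw [inner_add_right, inner_tsum_right ha, inner_tsum_right hb, tsum_congr hea, tsum_zero,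
    tsum_eq_single 0 heb]
  simp

theorem adjoint_eigenvector_from_model_general
    {H : Type*} [NormedAddCommGroup H] [InnerProductSpace ℂ H] [CompleteSpace H]
    (T B : H →L[ℂ] H)
    (hB1 : ContinuousLinearMap.adjoint T * T * B = 1)
    (lam : ℂ) (hlam : lam ≠ 0) (e : H)
    (h1 : Summable (fun n : ℕ =>
      ‖(ContinuousLinearMap.adjoint T ^ (n + 1)) e‖ * ‖lam‖⁻¹ ^ (n + 1)))
    (h2 : Summable (fun n : ℕ => ‖((T * B) ^ n) e‖ * ‖lam‖ ^ n))
    (w : H)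
    (hw : w = (∑' n : ℕ, (lam ^ (n + 1))⁻¹ • (ContinuousLinearMap.adjoint T ^ (n + 1)) e) +
        ∑' n : ℕ, lam ^ n • ((T * B) ^ n) e) :
    ContinuousLinearMap.adjoint T w = lam • w ∧
    ∀ E : Submodule ℂ H, IsClosed (E : Set H) →
      (∀ f ∈ E, ∀ g ∈ E, ∀ n : ℕ, 1 ≤ n →
        ⟪f, (T ^ n) g⟫ = 0 ∧ ⟪f, ((T * B) ^ n) g⟫ = 0) →
      e ∈ E → e ≠ 0 → w ≠ 0 := by
  have hAS : adjoint T * (T * B) = 1 := by rw [← mul_assoc, hB1]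
  have ha : Summable fun n : ℕ => (lam ^ (n + 1))⁻¹ • (adjoint T ^ (n + 1)) e :=
    .of_norm (h1.congr fun n => by simp [norm_smul, mul_comm])
  have hb : Summable fun n : ℕ => lam ^ n • ((T * B) ^ n) e :=
    .of_norm (h2.congr fun n => by simp [norm_smul, mul_comm])
  refine ⟨hw ▸ apply_tsum_add_tsum_eq_smul_of_mul_eq_one hAS hlam ha hb, ?_⟩
  intro E _ hprep heE hne hw0
  have hew : ⟪e, w⟫ = ⟪e, e⟫ := hw ▸ inner_tsum_add_tsum_eq_inner_self T (T * B) lam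
    (fun n hn => (hprep e heE e heE n hn).1) (fun n hn => (hprep e heE e heE n hn).2) ha hb
  rw [hw0, inner_zero_right] at hew
  exact hne (inner_self_eq_zero.mp hew.symm)

/-- Let `T` be a left-invertible bounded operator on a complex Hilbert
space `H` (i.e. `T*T` invertible, with inverse `B`), with Cauchy dual `T' = T * B`, let
`λ ≠ 0` and `e ∈ H`, and assume the series `Σ_{n≥1} ‖T*^n e‖ |λ|^{-n}` and
`Σ_{n≥0} ‖T'^n e‖ |λ|^n` converge.  Then
`w := Σ_{n≥1} λ^{-n} T*^n e + Σ_{n≥0} λ^n T'^n e` satisfies `T* w = λ w`.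
Moreover, if `E` is a closed subspace satisfying condition (prep), `e ∈ E` and `e ≠ 0`,
then `w ≠ 0`, so `λ` is an eigenvalue of `T*`. -/
theorem adjoint_eigenvector_from_model
    {H : Type*} [NormedAddCommGroup H] [InnerProductSpace ℂ H] [CompleteSpace H]
    (T B : H →L[ℂ] H)
    (hB1 : ContinuousLinearMap.adjoint T * T * B = 1)
    (hB2 : B * (ContinuousLinearMap.adjoint T * T) = 1)
    (lam : ℂ) (hlam : lam ≠ 0) (e : H)
    (h1 : Summable (fun n : ℕ =>
      ‖(ContinuousLinearMap.adjoint T ^ (n + 1)) e‖ * ‖lam‖⁻¹ ^ (n + 1)))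
    (h2 : Summable (fun n : ℕ => ‖((T * B) ^ n) e‖ * ‖lam‖ ^ n))
    (w : H)
    (hw : w = (∑' n : ℕ, (lam ^ (n + 1))⁻¹ • (ContinuousLinearMap.adjoint T ^ (n + 1)) e) +
        ∑' n : ℕ, lam ^ n • ((T * B) ^ n) e) :
    ContinuousLinearMap.adjoint T w = lam • w ∧
    ∀ E : Submodule ℂ H, IsClosed (E : Set H) →
      (∀ f ∈ E, ∀ g ∈ E, ∀ n : ℕ, 1 ≤ n →
        ⟪f, (T ^ n) g⟫ = 0 ∧ ⟪f, ((T * B) ^ n) g⟫ = 0) →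
      e ∈ E → e ≠ 0 → w ≠ 0 :=
  adjoint_eigenvector_from_model_general T B hB1 lam hlam e h1 h2 w hw
end
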